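/- arXiv:1706.08031 — 5 statements merged into one kernel-verified Lean document; each statement's English description precedes it below -/
import Mathlib

section
/- Let D ⊆ ℝ^d be a nonempty open set with δ_D(x) → 0 as |x| → ∞ with x ∈ D. Let Ψ : (0,∞) → (0,∞) be increasing, and let Γ : (1,∞) → (0,∞) be non-increasing with lim_{s→∞} Γ(s) = 0. Let p^D : (0,∞) × D × D → (0,∞) be jointly measurable and φ1 : D → (0,∞) be bounded and measurable, and assume: (IU) for every t > 0 there is a constant C_t ≥ 1 with C_t^{−1} φ1(x) φ1(y) ≤ p^D(t,x,y) ≤ C_t φ1(x) φ1(y) for all x, y ∈ D; (Survival lower bound) there exist constants c2, c3, M0 > 0 such that for all t > 0 and all x ∈ D with |x| ≥ M0, ∫_{B(x, δ_D(x))} p^D(t,x,y) dy ≥ c2 exp(−c3 t / Ψ(δ_D(x))); (Off-diagonal upper bound) there exist t0 ∈ (0,1] and c0 > 0 such that for each t ∈ (0, t0] there is a constant C(t) > 0 with p^D(t,x,y) ≤ C(t) Γ(|x−y|) for all x, y ∈ D with |x−y| ≥ c0. Then lim_{x ∈ D, |x| → ∞} Ψ(δ_D(x)) |log Γ(|x|/2)|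 = 0. -/
open MeasureTheory Metric Set Real Filter Topology

/-!
Fix `z ∈ D` and a small time `t`. For large `|x|`, the lower intrinsic ultracontractivity
bound at `(x, z)` together with the off-diagonal bound gives `φ1 x ≲ Γ (|x| / 2)`; the upper
bound then makes the survival mass `∫_{B(x, δ_D(x))} p^D(t, x, y) dy` at most `K Γ (|x| / 2)`,
since `δ_D(x) ≤ 1` far out. Against the survival lower bound this reads
`c2 exp (-c3 t / Ψ (δ_D(x))) ≤ K Γ (|x| / 2)`, and once `Γ (|x| / 2)` is small compared with
`(c2 / K)²`, taking logarithms yields `Ψ (δ_D(x)) |log Γ (|x| / 2)| ≤ 2 c3 t`.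
-/

section NormedGroup

variable {E : Type*} [NormedAddCommGroup E]

theorem eventually_comap_norm_atTop_iff {D : Set E} {P : E → Prop} :
    (∀ᶠ x in comap (‖·‖) atTop, x ∈ D → P x) ↔ ∃ M : ℝ, ∀ x ∈ D, M ≤ ‖x‖ → P x := by
  simp only [eventually_comap, eventually_atTop]
  constructor
  · rintro ⟨M, hM⟩
    exact ⟨M, fun x hx hxM => hM _ hxM x rfl hx⟩
  · rintro ⟨M, hM⟩
    exact ⟨M, fun _ hb x hx hxD => hM x hxD (hx ▸ hb)⟩

theorem half_norm_le_dist {x z : E} (h : ‖z‖ ≤ ‖x‖ / 2) : ‖x‖ / 2 ≤ dist x z := by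
  have := norm_sub_norm_le x z
  rw [dist_eq_norm]
  linarith

theorem ground_state_le_of_offDiagonal {q : E → E → ℝ} {φ : E → ℝ} {Γ : ℝ → ℝ} {x z : E}
    {C Ct c0 : ℝ} (hC : 0 < C) (hCt : 0 ≤ Ct) (hz : 0 < φ z) (hΓ : AntitoneOn Γ (Ioi 1))
    (hlow : C⁻¹ * (φ x * φ z) ≤ q x z) (hoff : c0 ≤ dist x z → q x z ≤ Ct * Γ (dist x z))
    (hx : 1 < ‖x‖ / 2) (hxz : ‖z‖ ≤ ‖x‖ / 2) (hxc : c0 ≤ ‖x‖ / 2) :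
    φ x ≤ C * Ct / φ z * Γ (‖x‖ / 2) := by
  have hdist := half_norm_le_dist hxz
  have hΓdist : Γ (dist x z) ≤ Γ (‖x‖ / 2) := hΓ hx (hx.trans_le hdist) hdist
  have key : C⁻¹ * (φ x * φ z) ≤ Ct * Γ (‖x‖ / 2) :=
    (hlow.trans (hoff (hxc.trans hdist))).trans (by gcongr)
  rw [div_mul_eq_mul_div, le_div_iff₀ hz, mul_assoc]
  rwa [inv_mul_le_iff₀ hC] at key

theorem pos_of_setIntegral_ball_ne_zero [MeasurableSpace E] {μ : Measure E} {f : E → ℝ} {x : E}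
    {r : ℝ} (h : ∫ y in ball x r, f y ∂μ ≠ 0) : 0 < r := by
  by_contra hr
  rw [ball_eq_empty.2 (not_lt.1 hr), Measure.restrict_empty, integral_zero_measure] at h
  exact h rfl

theorem setIntegral_ball_le [MeasurableSpace E] [BorelSpace E] [ProperSpace E] (μ : Measure E)
    [μ.IsAddHaarMeasure] {f : E → ℝ} {x : E} {r R B : ℝ} (hr : r ≤ R) (hB : 0 ≤ B)
    (hf : ∀ y ∈ ball x r, ‖f y‖ ≤ B) :
    ∫ y in ball x r, f y ∂μ ≤ B * μ.real (ball 0 R) := calc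
  ∫ y in ball x r, f y ∂μ ≤ B * μ.real (ball x r) :=
    (le_abs_self _).trans (norm_setIntegral_le_of_norm_le_const measure_ball_lt_top hf)
  _ ≤ B * μ.real (ball x R) := by
    gcongr
    exact measure_ball_lt_top.ne
  _ = B * μ.real (ball 0 R) := by rw [Measure.addHaar_real_ball_center]

theorem setIntegral_ball_infDist_le [MeasurableSpace E] [BorelSpace E] [ProperSpace E]
    (μ : Measure E) [μ.IsAddHaarMeasure] {D : Set E} {q : E → E → ℝ} {φ : E → ℝ} {x : E}
    {C Mφ R : ℝ} (hC : 0 ≤ C) (hx : x ∈ D) (hφx : 0 ≤ φ x) (hMφ : ∀ y ∈ D, φ y ≤ Mφ)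
    (hq : ∀ y ∈ D, 0 ≤ q x y ∧ q x y ≤ C * (φ x * φ y)) (hR : infDist x Dᶜ ≤ R) :
    ∫ y in ball x (infDist x Dᶜ), q x y ∂μ ≤ C * φ x * Mφ * μ.real (ball 0 R) := by
  refine setIntegral_ball_le μ hR ?_ fun y hy => ?_
  · have := hφx.trans (hMφ x hx)
    positivity
  · have hyD := ball_infDist_compl_subset hy
    obtain ⟨hq0, hq1⟩ := hq y hyD
    rw [Real.norm_of_nonneg hq0, mul_assoc]
    exact hq1.trans (by gcongr; exact hMφ y hyD)

theorem setIntegral_ball_infDist_le_of_offDiagonal [MeasurableSpace E] [BorelSpace E]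
    [ProperSpace E] (μ : Measure E) [μ.IsAddHaarMeasure] {D : Set E} {q : E → E → ℝ}
    {φ : E → ℝ} {Γ : ℝ → ℝ} {C Ct c0 Mφ R : ℝ} {x z : E} (hC : 0 < C) (hCt : 0 ≤ Ct)
    (hφ : ∀ y ∈ D, 0 < φ y) (hMφ : ∀ y ∈ D, φ y ≤ Mφ) (hq : ∀ x ∈ D, ∀ y ∈ D, 0 < q x y)
    (hIU : ∀ x ∈ D, ∀ y ∈ D, C⁻¹ * (φ x * φ y) ≤ q x y ∧ q x y ≤ C * (φ x * φ y))
    (hoff : ∀ x ∈ D, ∀ y ∈ D, c0 ≤ dist x y → q x y ≤ Ct * Γ (dist x y))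
    (hΓ : AntitoneOn Γ (Ioi 1)) (hx : x ∈ D) (hz : z ∈ D) (hx1 : 1 < ‖x‖ / 2)
    (hxz : ‖z‖ ≤ ‖x‖ / 2) (hxc : c0 ≤ ‖x‖ / 2) (hR : infDist x Dᶜ ≤ R) :
    ∫ y in ball x (infDist x Dᶜ), q x y ∂μ ≤
      C * (C * Ct / φ z) * Mφ * μ.real (ball 0 R) * Γ (‖x‖ / 2) := by
  have hφx := ground_state_le_of_offDiagonal hC hCt (hφ z hz) hΓ (hIU x hx z hz).1
    (hoff x hx z hz) hx1 hxz hxc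
  have hMφ0 : 0 ≤ Mφ := (hφ x hx).le.trans (hMφ x hx)
  calc ∫ y in ball x (infDist x Dᶜ), q x y ∂μ ≤ C * φ x * Mφ * μ.real (ball 0 R) :=
        setIntegral_ball_infDist_le μ hC.le hx (hφ x hx).le hMφ
          (fun y hy => ⟨(hq x hx y hy).le, (hIU x hx y hy).2⟩) hR
    _ ≤ C * (C * Ct / φ z * Γ (‖x‖ / 2)) * Mφ * μ.real (ball 0 R) := by gcongr
    _ = C * (C * Ct / φ z) * Mφ * μ.real (ball 0 R) * Γ (‖x‖ / 2) := by ring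

end NormedGroup

theorem mul_abs_log_le_of_mul_exp_le {Ψ a c K γ : ℝ} (hΨ : 0 < Ψ) (hc : 0 < c) (hK : 0 < K)
    (hγ : 0 < γ) (hγ1 : γ ≤ 1) (hKγ : (K / c) ^ 2 * γ ≤ 1) (h : c * exp (-(a / Ψ)) ≤ K * γ) :
    Ψ * |log γ| ≤ 2 * a := by
  have hlog : -(a / Ψ) ≤ log (K / c) + log γ := by
    rw [← log_mul (by positivity) hγ.ne', ← log_exp (-(a / Ψ))]
    refine log_le_log (exp_pos _) ?_
    rw [div_mul_eq_mul_div, le_div_iff₀ hc, mul_comm]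
    exact h
  have hKγlog : 2 * log (K / c) + log γ ≤ 0 := by
    have := log_nonpos (by positivity) hKγ
    rwa [log_mul (by positivity) hγ.ne', log_pow, Nat.cast_ofNat] at this
  rw [abs_of_nonpos (log_nonpos hγ.le hγ1)]
  have hneg : -log γ ≤ 2 * a / Ψ := by rw [mul_div_assoc]; linarith
  calc Ψ * -log γ ≤ Ψ * (2 * a / Ψ) := by gcongr
    _ = 2 * a := by field_simp

theorem statement6_general
    (d : ℕ)
    (D : Set (EuclideanSpace ℝ (Fin d))) (hDne : D.Nonempty)
    (hδ0 : ∀ ε > 0, ∃ M : ℝ, ∀ x ∈ D, M ≤ ‖x‖ → Metric.infDist x Dᶜ < ε)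
    (Ψ : ℝ → ℝ) (hΨpos : ∀ u > 0, 0 < Ψ u)
    (Γ : ℝ → ℝ) (hΓpos : ∀ s > 1, 0 < Γ s) (hΓanti : AntitoneOn Γ (Ioi 1))
    (hΓ0 : Tendsto Γ atTop (𝓝 0))
    (p : ℝ → EuclideanSpace ℝ (Fin d) → EuclideanSpace ℝ (Fin d) → ℝ)
    (hppos : ∀ t > 0, ∀ x ∈ D, ∀ y ∈ D, 0 < p t x y)
    (φ1 : EuclideanSpace ℝ (Fin d) → ℝ)
    (hφpos : ∀ x ∈ D, 0 < φ1 x)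
    (hφbdd : ∃ M : ℝ, ∀ x ∈ D, φ1 x ≤ M)
    (hIU : ∀ t > 0, ∃ C ≥ (1 : ℝ), ∀ x ∈ D, ∀ y ∈ D,
      C⁻¹ * (φ1 x * φ1 y) ≤ p t x y ∧ p t x y ≤ C * (φ1 x * φ1 y))
    (hsurv : ∃ c2 > (0 : ℝ), ∃ c3 > (0 : ℝ), ∃ M0 > (0 : ℝ), ∀ t > 0, ∀ x ∈ D,
      M0 ≤ ‖x‖ →
      c2 * Real.exp (-(c3 * t / Ψ (Metric.infDist x Dᶜ))) ≤
        ∫ y in ball x (Metric.infDist x Dᶜ), p t x y)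
    (hoff : ∃ t0 > (0 : ℝ), t0 ≤ 1 ∧ ∃ c0 > (0 : ℝ), ∀ t, 0 < t → t ≤ t0 →
      ∃ Ct > (0 : ℝ), ∀ x ∈ D, ∀ y ∈ D, c0 ≤ dist x y → p t x y ≤ Ct * Γ (dist x y)) :
    ∀ ε > 0, ∃ M : ℝ, ∀ x ∈ D, M ≤ ‖x‖ →
      Ψ (Metric.infDist x Dᶜ) * |Real.log (Γ (‖x‖ / 2))| < ε := by
  intro ε hε
  obtain ⟨t0, ht0, -, c0, -, hoff⟩ := hoff
  obtain ⟨c2, hc2, c3, hc3, M0, -, hsurv⟩ := hsurv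
  obtain ⟨z, hz⟩ := hDne
  obtain ⟨Mφ, hMφ⟩ := hφbdd
  set t := min t0 (ε / (4 * c3))
  have ht : 0 < t := lt_min ht0 (by positivity)
  have htε : 2 * (c3 * t) < ε := calc
    2 * (c3 * t) ≤ 2 * (c3 * (ε / (4 * c3))) := by gcongr; exact min_le_right _ _
    _ < ε := by field_simp; linarith
  obtain ⟨C, hC1, hIU⟩ := hIU t ht
  obtain ⟨Ct, hCt, hoff⟩ := hoff t ht (min_le_left _ _)
  set K := C * (C * Ct / φ1 z) * Mφ * volume.real (ball (0 : EuclideanSpace ℝ (Fin d)) 1)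
  have hK : 0 < K := by
    have hφz := hφpos z hz
    have hMφ0 := hφz.trans_le (hMφ z hz)
    have hV := ENNReal.toReal_pos (measure_ball_pos volume (0 : EuclideanSpace ℝ (Fin d))
      one_pos).ne' measure_ball_lt_top.ne
    positivity
  have hlarge : ∀ᶠ s in atTop, (Γ s ≤ 1 ∧ (K / c2) ^ 2 * Γ s ≤ 1) ∧
      1 < s ∧ ‖z‖ ≤ s ∧ c0 ≤ s := by
    refine (hΓ0.eventually (eventually_le_nhds one_pos)).and
      ((hΓ0.const_mul _).eventually (eventually_le_nhds (by simp))) |>.and ?_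
    exact (eventually_gt_atTop 1).and ((eventually_ge_atTop _).and (eventually_ge_atTop _))
  have hnorm : Tendsto (fun x : EuclideanSpace ℝ (Fin d) => ‖x‖ / 2)
      (comap (‖·‖) atTop) atTop := tendsto_comap.atTop_div_const two_pos
  rw [← eventually_comap_norm_atTop_iff]
  filter_upwards [eventually_comap_norm_atTop_iff.2 (hδ0 1 one_pos),
    eventually_comap_norm_atTop_iff.2 ⟨M0, hsurv t ht⟩,
    hnorm.eventually hlarge] with x hδ1 hsurvx ⟨⟨hΓ1, hKΓ⟩, hx1, hxz, hxc⟩ hx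
  have hsurvx := hsurvx hx
  have hδ : 0 < infDist x Dᶜ :=
    pos_of_setIntegral_ball_ne_zero ((by positivity : (0 : ℝ) < _).trans_le hsurvx).ne'
  refine (mul_abs_log_le_of_mul_exp_le (hΨpos _ hδ) hc2 hK (hΓpos _ hx1) hΓ1 hKΓ ?_).trans_lt htε
  exact hsurvx.trans <| setIntegral_ball_infDist_le_of_offDiagonal volume (by linarith) hCt.le
    hφpos hMφ (hppos t ht) hIU hoff hΓanti hx hz hx1 hxz hxc (hδ1 hx).le

theorem statement6
    (d : ℕ) (hd : 1 ≤ d)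
    (D : Set (EuclideanSpace ℝ (Fin d))) (hD : IsOpen D) (hDne : D.Nonempty)
    (hδ0 : ∀ ε > 0, ∃ M : ℝ, ∀ x ∈ D, M ≤ ‖x‖ → Metric.infDist x Dᶜ < ε)
    (Ψ : ℝ → ℝ) (hΨpos : ∀ u > 0, 0 < Ψ u) (hΨmono : MonotoneOn Ψ (Ioi 0))
    (Γ : ℝ → ℝ) (hΓpos : ∀ s > 1, 0 < Γ s) (hΓanti : AntitoneOn Γ (Ioi 1))
    (hΓ0 : Tendsto Γ atTop (𝓝 0))
    (p : ℝ → EuclideanSpace ℝ (Fin d) → EuclideanSpace ℝ (Fin d) → ℝ)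
    (hpmeas : ∀ t > 0, Measurable (Function.uncurry (p t)))
    (hppos : ∀ t > 0, ∀ x ∈ D, ∀ y ∈ D, 0 < p t x y)
    (φ1 : EuclideanSpace ℝ (Fin d) → ℝ)
    (hφmeas : Measurable φ1) (hφpos : ∀ x ∈ D, 0 < φ1 x)
    (hφbdd : ∃ M : ℝ, ∀ x ∈ D, φ1 x ≤ M)
    (hIU : ∀ t > 0, ∃ C ≥ (1 : ℝ), ∀ x ∈ D, ∀ y ∈ D,
      C⁻¹ * (φ1 x * φ1 y) ≤ p t x y ∧ p t x y ≤ C * (φ1 x * φ1 y))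
    (hsurv : ∃ c2 > (0 : ℝ), ∃ c3 > (0 : ℝ), ∃ M0 > (0 : ℝ), ∀ t > 0, ∀ x ∈ D,
      M0 ≤ ‖x‖ →
      c2 * Real.exp (-(c3 * t / Ψ (Metric.infDist x Dᶜ))) ≤
        ∫ y in ball x (Metric.infDist x Dᶜ), p t x y)
    (hoff : ∃ t0 > (0 : ℝ), t0 ≤ 1 ∧ ∃ c0 > (0 : ℝ), ∀ t, 0 < t → t ≤ t0 →
      ∃ Ct > (0 : ℝ), ∀ x ∈ D, ∀ y ∈ D, c0 ≤ dist x y → p t x y ≤ Ct * Γ (dist x y)) :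
    ∀ ε > 0, ∃ M : ℝ, ∀ x ∈ D, M ≤ ‖x‖ →
      Ψ (Metric.infDist x Dᶜ) * |Real.log (Γ (‖x‖ / 2))| < ε :=
  statement6_general d D hDne hδ0 Ψ hΨpos Γ hΓpos hΓanti hΓ0 p hppos φ1 hφpos hφbdd hIU hsurv hoff
end

section
/- Let Φ be strictly increasing with weak scaling exponents in (0,2), let θ > 0, and let f : (0,∞) → (0,∞) be bounded and satisfy f(s) ≤ c2 Φ⁻¹((log s)^{−θ}) for all s ≥ s0, for some constants c2 > 0 and s0 > 1. Then there exist constants c3, c4, s1 > 0 such that f*⁻¹(Φ⁻¹(s)) ≤ c3 exp(c4 s^{−1/θ}) for all 0 < s ≤ s1. -/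
/-!
Put `c = max c2 1` and `K = cU c^α2`. Upper scaling gives `Φ u ≤ K Φ (u / c)`, hence
`c Φ⁻¹(t) ≤ Φ⁻¹(K t)` (lower scaling only ensures that `Φ` is unbounded, so that
these infima are not taken over the empty set). If `u ≥ s0 exp ((K / s)^{1/θ})` then
`K (log u)^{-θ} ≤ s`, so the hypothesis on `f` gives `f u ≤ c Φ⁻¹((log u)^{-θ}) ≤ Φ⁻¹(s)`,
i.e. `f*⁻¹(Φ⁻¹(s)) ≤ s0 exp (K^{1/θ} s^{-1/θ})`.
-/

open MeasureTheory Set Real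

noncomputable section

/-- Generalized inverse `Φ⁻¹(t) = inf {s > 0 : Φ(s) ≥ t}`. -/
def invFun' (Φ : ℝ → ℝ) (t : ℝ) : ℝ := sInf {s : ℝ | 0 < s ∧ t ≤ Φ s}

/-- `f*(r) = sup_{s ≥ r} f(s)`. -/
def fStar (f : ℝ → ℝ) (r : ℝ) : ℝ := sSup (f '' Ici r)

/-- `f*⁻¹(v) = inf {s > 0 : f*(s) ≤ v}`. -/
def fStarInv (f : ℝ → ℝ) (v : ℝ) : ℝ := sInf {s : ℝ | 0 < s ∧ fStar f s ≤ v}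

section InvFun

variable {Φ : ℝ → ℝ}

theorem invFun'_nonneg (Φ : ℝ → ℝ) (t : ℝ) : 0 ≤ invFun' Φ t :=
  Real.sInf_nonneg fun _ hx => hx.1.le

theorem invFun'_le {t u : ℝ} (hu : 0 < u) (htu : t ≤ Φ u) : invFun' Φ t ≤ u :=
  csInf_le ⟨0, fun _ hx => hx.1.le⟩ ⟨hu, htu⟩

theorem exists_pos_le_of_lower_scaling (hΦpos : ∀ u > 0, 0 < Φ u) {α cL : ℝ} (hα : 0 < α)
    (hcL : 0 < cL) (hlow : ∀ r R : ℝ, 0 < r → r ≤ R → cL * (R / r) ^ α ≤ Φ R / Φ r)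
    (s : ℝ) :
    ∃ w > 0, s ≤ Φ w := by
  have hΦ1 := hΦpos 1 one_pos
  have hgrowth : Filter.Tendsto (fun R : ℝ => cL * R ^ α * Φ 1) Filter.atTop Filter.atTop :=
    ((tendsto_rpow_atTop hα).const_mul_atTop hcL).atTop_mul_const hΦ1
  obtain ⟨R, hsR, hR⟩ :=
    ((hgrowth.eventually_ge_atTop s).and (Filter.eventually_ge_atTop 1)).exists
  have hΦR := hlow 1 R one_pos hR
  rw [div_one, le_div_iff₀ hΦ1] at hΦR
  exact ⟨R, by linarith, hsR.trans hΦR⟩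

theorem mul_invFun'_le_invFun' (hΦpos : ∀ u > 0, 0 < Φ u) {α cU : ℝ} (hcU : 0 < cU)
    (hup : ∀ r R : ℝ, 0 < r → r ≤ R → Φ R / Φ r ≤ cU * (R / r) ^ α)
    {c t s : ℝ} (hc : 1 ≤ c) (hs : ∃ w > 0, s ≤ Φ w) (hts : cU * c ^ α * t ≤ s) :
    c * invFun' Φ t ≤ invFun' Φ s := by
  obtain ⟨w, hw, hsw⟩ := hs
  have hc0 : 0 < c := one_pos.trans_le hc
  have hK : 0 < cU * c ^ α := mul_pos hcU (rpow_pos_of_pos hc0 α)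
  refine le_csInf ⟨w, hw, hsw⟩ ?_
  rintro u ⟨hu, hsu⟩
  have huc : 0 < u / c := div_pos hu hc0
  have hΦu : Φ u ≤ cU * c ^ α * Φ (u / c) := by
    have h := hup (u / c) u huc (div_le_self hu.le hc)
    rwa [div_div_cancel₀ hu.ne', div_le_iff₀ (hΦpos _ huc)] at h
  have ht : t ≤ Φ (u / c) := le_of_mul_le_mul_left ((hts.trans hsu).trans hΦu) hK
  calc c * invFun' Φ t ≤ c * (u / c) := mul_le_mul_of_nonneg_left (invFun'_le huc ht) hc0.le
    _ = u := mul_div_cancel₀ u hc0.ne'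

end InvFun

theorem fStarInv_le_of_forall_le {f : ℝ → ℝ} {r v : ℝ} (hr : 0 < r) (hv : 0 ≤ v)
    (hf : ∀ u, r ≤ u → f u ≤ v) : fStarInv f v ≤ r := by
  refine csInf_le ⟨0, fun _ hx => hx.1.le⟩ ⟨hr, Real.sSup_le ?_ hv⟩
  rintro _ ⟨u, hu, rfl⟩
  exact hf u hu

theorem le_log_of_mul_exp_le {a x u : ℝ} (ha : 1 ≤ a) (h : a * exp x ≤ u) : x ≤ log u := by
  have hexp : exp x ≤ u := (le_mul_of_one_le_left (exp_pos x).le ha).trans h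
  exact (le_log_iff_exp_le ((exp_pos x).trans_le hexp)).mpr hexp

theorem mul_rpow_neg_le {K s θ L : ℝ} (hK : 0 < K) (hs : 0 < s) (hθ : 0 < θ)
    (hL : K ^ (1 / θ) * s ^ (-(1 / θ)) ≤ L) : K * L ^ (-θ) ≤ s := by
  have hX : 0 < K ^ (1 / θ) * s ^ (-(1 / θ)) := by positivity
  have hXθ : (K ^ (1 / θ) * s ^ (-(1 / θ))) ^ (-θ) = K⁻¹ * s := by
    rw [mul_rpow (by positivity) (by positivity), ← rpow_mul hK.le, ← rpow_mul hs.le,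
      show 1 / θ * -θ = -1 by field_simp, show -(1 / θ) * -θ = 1 by field_simp,
      rpow_neg_one, rpow_one]
  calc K * L ^ (-θ) ≤ K * (K⁻¹ * s) := by
        rw [← hXθ]
        exact mul_le_mul_of_nonneg_left (rpow_le_rpow_of_nonpos hX hL (by linarith)) hK.le
    _ = s := by field_simp

theorem statement11_general
    (Φ : ℝ → ℝ) (hΦpos : ∀ u > 0, 0 < Φ u)
    (α1 α2 cL cU : ℝ) (hα1 : 0 < α1)
    (hcL : 0 < cL) (hcU : cL ≤ cU)
    (hΦscal : ∀ r R : ℝ, 0 < r → r ≤ R →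
      cL * (R / r) ^ α1 ≤ Φ R / Φ r ∧ Φ R / Φ r ≤ cU * (R / r) ^ α2)
    (θ : ℝ) (hθ : 0 < θ)
    (f : ℝ → ℝ)
    (c2 s0 : ℝ) (hs0 : 1 < s0)
    (hf : ∀ s ≥ s0, f s ≤ c2 * invFun' Φ (Real.log s ^ (-θ))) :
    ∃ c3 > (0 : ℝ), ∃ c4 > (0 : ℝ), ∃ s1 > (0 : ℝ), ∀ s : ℝ, 0 < s → s ≤ s1 →
      fStarInv f (invFun' Φ s) ≤ c3 * Real.exp (c4 * s ^ (-(1 / θ))) := by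
  set c := max c2 1
  set K := cU * c ^ α2
  have hcU0 : 0 < cU := hcL.trans_le hcU
  have hK : 0 < K := by positivity
  have hunbdd :=
    exists_pos_le_of_lower_scaling hΦpos hα1 hcL fun r R hr hrR => (hΦscal r R hr hrR).1
  refine ⟨s0, by linarith, K ^ (1 / θ), by positivity, 1, one_pos, fun s hs _ => ?_⟩
  refine fStarInv_le_of_forall_le (by positivity) (invFun'_nonneg Φ s) fun u hu => ?_
  have hs0u : s0 ≤ u :=
    (le_mul_of_one_le_right (by linarith) (one_le_exp (by positivity))).trans hu
  have hlog := le_log_of_mul_exp_le hs0.le hu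
  calc f u ≤ c2 * invFun' Φ (log u ^ (-θ)) := hf u hs0u
    _ ≤ c * invFun' Φ (log u ^ (-θ)) :=
        mul_le_mul_of_nonneg_right (le_max_left _ _) (invFun'_nonneg _ _)
    _ ≤ invFun' Φ s :=
        mul_invFun'_le_invFun' hΦpos hcU0 (fun r R hr hrR => (hΦscal r R hr hrR).2)
          (le_max_right _ _) (hunbdd s) (mul_rpow_neg_le hK hs hθ hlog)

theorem statement11
    (Φ : ℝ → ℝ) (hΦpos : ∀ u > 0, 0 < Φ u) (hΦmono : StrictMonoOn Φ (Ioi 0))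
    (α1 α2 cL cU : ℝ) (hα1 : 0 < α1) (hα12 : α1 ≤ α2) (hα2 : α2 < 2)
    (hcL : 0 < cL) (hcU : cL ≤ cU)
    (hΦscal : ∀ r R : ℝ, 0 < r → r ≤ R →
      cL * (R / r) ^ α1 ≤ Φ R / Φ r ∧ Φ R / Φ r ≤ cU * (R / r) ^ α2)
    (θ : ℝ) (hθ : 0 < θ)
    (f : ℝ → ℝ) (hfpos : ∀ u > 0, 0 < f u) (hfbdd : ∃ Mf : ℝ, ∀ u > 0, f u ≤ Mf)
    (c2 s0 : ℝ) (hc2 : 0 < c2) (hs0 : 1 < s0)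
    (hf : ∀ s ≥ s0, f s ≤ c2 * invFun' Φ (Real.log s ^ (-θ))) :
    ∃ c3 > (0 : ℝ), ∃ c4 > (0 : ℝ), ∃ s1 > (0 : ℝ), ∀ s : ℝ, 0 < s → s ≤ s1 →
      fStarInv f (invFun' Φ s) ≤ c3 * Real.exp (c4 * s ^ (-(1 / θ))) :=
  statement11_general Φ hΦpos α1 α2 cL cU hα1 hcL hcU hΦscal θ hθ f c2 s0 hs0 hf
end
end

section
/- Let d ≥ 2, let f : (0,∞) → (0,∞) be bounded and continuous, and let D_f be the corresponding horn-shaped region. Then for every x1 > 0 and x = (x1, 0, …, 0) ∈ ℝ^d one has min( x1, inf{ f(s) : s > 0, |s − x1| ≤ f(x1) } ) ≤ δ_{D_f}(x) ≤ min( x1, f(x1) ). -/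
open MeasureTheory Metric Set Real

noncomputable section

/-- The horn-shaped region `D_f ⊆ ℝ^(d+2)` with reference function `f`. -/
def horn (d : ℕ) (f : ℝ → ℝ) : Set (EuclideanSpace ℝ (Fin (d + 2))) :=
  {x | 0 < x 0 ∧ Real.sqrt (∑ i ∈ Finset.univ.erase (0 : Fin (d + 2)), x i ^ 2) < f (x 0)}

/-! Write `x = (x1, 0, …, 0)` and `m` for the infimum of `f` over `|s - x1| ≤ f x1`. A point `z`
with `|z - x| < min x1 m` has `|z1 - x1| < x1`, so `z1 > 0`, and `|z1 - x1| < m ≤ f x1`, so its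
transverse radius is below `m ≤ f z1`: the ball of radius `min x1 m` lies in `D_f`. Conversely the
origin and `x + f x1 • e₂` lie outside `D_f`, at distances `x1` and `f x1` from `x`. -/

theorem Metric.le_infDist_compl_of_ball_subset {α : Type*} [PseudoMetricSpace α] {x : α}
    {r : ℝ} {s : Set α} (hs : sᶜ.Nonempty) (h : ball x r ⊆ s) : r ≤ infDist x sᶜ :=
  (le_infDist hs).2 fun _ hy => not_lt.1 fun hlt => hy (h (mem_ball'.2 hlt))

theorem EuclideanSpace.sqrt_sum_erase_sq_le_dist_single {ι : Type*} [Fintype ι] [DecidableEq ι]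
    (j : ι) (a : ℝ) (z : EuclideanSpace ℝ ι) :
    √(∑ i ∈ Finset.univ.erase j, z i ^ 2) ≤ dist (EuclideanSpace.single j a) z := by
  rw [EuclideanSpace.dist_eq, ← Finset.add_sum_erase _ _ (Finset.mem_univ j)]
  refine Real.sqrt_le_sqrt (le_add_of_nonneg_of_le (sq_nonneg _) ?_)
  exact Finset.sum_le_sum fun i hi => by simp [(Finset.mem_erase.1 hi).1]

theorem abs_sub_apply_le_dist_single {ι : Type*} [Fintype ι] [DecidableEq ι]
    (j : ι) (a : ℝ) (z : EuclideanSpace ℝ ι) :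
    |a - z j| ≤ dist (EuclideanSpace.single j a) z := by
  simpa [Real.dist_eq] using PiLp.dist_apply_le (EuclideanSpace.single j a) z j

theorem zero_notMem_horn (d : ℕ) (f : ℝ → ℝ) :
    (0 : EuclideanSpace ℝ (Fin (d + 2))) ∉ horn d f :=
  fun h => h.1.false

theorem single_add_single_notMem_horn (d : ℕ) (f : ℝ → ℝ) (t : ℝ) :
    EuclideanSpace.single 0 t + EuclideanSpace.single 1 (f t) ∉ horn d f := by
  set y : EuclideanSpace ℝ (Fin (d + 2)) :=
    EuclideanSpace.single 0 t + EuclideanSpace.single 1 (f t)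
  have hy0 : y 0 = t := by simp [y]
  have htrans : ∑ i ∈ Finset.univ.erase 0, y i ^ 2 = f t ^ 2 := by
    rw [Finset.sum_eq_single_of_mem 1 (by simp)]
    · simp [y]
    · intro i hi hi1
      simp [y, (Finset.mem_erase.1 hi).1, hi1]
  rintro ⟨-, h⟩
  rw [hy0, htrans, Real.sqrt_sq_eq_abs] at h
  exact (le_abs_self (f t)).not_gt h

theorem ball_subset_horn {d : ℕ} {f : ℝ → ℝ} {x1 r : ℝ} (hr : r ≤ x1)
    (hf : ∀ s, 0 < s → |s - x1| < r → r ≤ f s) :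
    ball (EuclideanSpace.single (0 : Fin (d + 2)) x1) r ⊆ horn d f := by
  intro z hz
  have hdist : dist (EuclideanSpace.single 0 x1) z < r := mem_ball'.1 hz
  have hx1z := abs_sub_apply_le_dist_single 0 x1 z
  have hz0 : 0 < z 0 := by linarith [le_abs_self (x1 - z 0)]
  refine ⟨hz0, ?_⟩
  calc √(∑ i ∈ Finset.univ.erase 0, z i ^ 2) ≤ dist (EuclideanSpace.single 0 x1) z :=
        EuclideanSpace.sqrt_sum_erase_sq_le_dist_single 0 x1 z
    _ < r := hdist
    _ ≤ f (z 0) := hf (z 0) hz0 (by rw [abs_sub_comm]; linarith)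

theorem infDist_single_compl_horn_le {d : ℕ} {f : ℝ → ℝ} {x1 : ℝ} (hx1 : 0 ≤ x1)
    (hf : 0 ≤ f x1) :
    infDist (EuclideanSpace.single (0 : Fin (d + 2)) x1) (horn d f)ᶜ ≤ min x1 (f x1) := by
  refine le_min ?_ ?_
  · calc _ ≤ dist (EuclideanSpace.single (0 : Fin (d + 2)) x1) 0 :=
          infDist_le_dist_of_mem (zero_notMem_horn d f)
      _ = x1 := by simp [abs_of_nonneg hx1]
  · calc _ ≤ dist (EuclideanSpace.single (0 : Fin (d + 2)) x1)
            (EuclideanSpace.single 0 x1 + EuclideanSpace.single 1 (f x1)) :=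
          infDist_le_dist_of_mem (single_add_single_notMem_horn d f x1)
      _ = f x1 := by simp [abs_of_nonneg hf]

theorem statement16_general
    (d : ℕ)
    (f : ℝ → ℝ) (hfpos : ∀ u > 0, 0 < f u) :
    ∀ x1 : ℝ, 0 < x1 →
      min x1 (sInf {v : ℝ | ∃ s : ℝ, 0 < s ∧ |s - x1| ≤ f x1 ∧ v = f s}) ≤
        Metric.infDist (EuclideanSpace.single (0 : Fin (d + 2)) x1) (horn d f)ᶜ ∧
      Metric.infDist (EuclideanSpace.single (0 : Fin (d + 2)) x1) (horn d f)ᶜ ≤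
        min x1 (f x1) := by
  intro x1 hx1
  set m := sInf {v : ℝ | ∃ s : ℝ, 0 < s ∧ |s - x1| ≤ f x1 ∧ v = f s}
  have hm : ∀ s, 0 < s → |s - x1| ≤ f x1 → m ≤ f s := fun s hs hsx =>
    csInf_le ⟨0, by rintro _ ⟨u, hu, -, rfl⟩; exact (hfpos u hu).le⟩ ⟨s, hs, hsx, rfl⟩
  have hfx1 : 0 < f x1 := hfpos x1 hx1
  have hm_fx1 : m ≤ f x1 := hm x1 hx1 (by simpa using hfx1.le)
  refine ⟨le_infDist_compl_of_ball_subset ⟨0, zero_notMem_horn d f⟩ ?_,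
    infDist_single_compl_horn_le hx1.le hfx1.le⟩
  refine ball_subset_horn (min_le_left _ _) fun s hs hsx => ?_
  exact (min_le_right _ _).trans (hm s hs (by linarith [min_le_right x1 m]))

theorem statement16
    (d : ℕ)
    (f : ℝ → ℝ) (hfpos : ∀ u > 0, 0 < f u) (hfbdd : ∃ Mf : ℝ, ∀ u > 0, f u ≤ Mf)
    (hfcont : ContinuousOn f (Ioi 0)) :
    ∀ x1 : ℝ, 0 < x1 →
      min x1 (sInf {v : ℝ | ∃ s : ℝ, 0 < s ∧ |s - x1| ≤ f x1 ∧ v = f s}) ≤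
        Metric.infDist (EuclideanSpace.single (0 : Fin (d + 2)) x1) (horn d f)ᶜ ∧
      Metric.infDist (EuclideanSpace.single (0 : Fin (d + 2)) x1) (horn d f)ᶜ ≤
        min x1 (f x1) :=
  statement16_general d f hfpos
end
end

section
/- Let d ≥ 1, let Φ be strictly increasing with weak scaling exponents in (0,2) and Ψ be increasing with positive weak scaling exponents. Let θ1 ≥ θ2 > 0 and let f : (0,∞) → (0,∞) be bounded and continuous with c3 exp(−c4 s^{θ1}) ≤ f(s) ≤ c5 exp(−c6 s^{θ2}) for all s ≥ s0, for some constants c3, c4, c5, c6, s0 > 0. Fix constants C1, C2, C3 > 0 and define F(s) = f*⁻¹(C3 (Φ⁻¹(s) ∧ 1)) and β(s) = C1 (Φ⁻¹(s) ∧ 1)^{−d} Ψ(Φ⁻¹(s) ∧ 1)^{−2} exp{ C1 (1 + F(s)) log( e + F(s) / inf_{C2 ≤ r ≤ F(s)} f(r) ) }. Then there exist constants c7, c8, s1 > 0 such that β(s) ≤ c7 exp( c8 (log(1/s))^{(1+θ1)/θ2} ) for all 0 < s ≤ s1. -/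
/-!
Write `g = min (Φ⁻¹ s) 1` and `L = log (1 / s)`. The lower scaling of `Φ` gives
`g ≳ s ^ (1 / α1)`, so by the upper scaling of `Ψ` the prefactor `g⁻¹ ^ d * Ψ(g)⁻²` is
`exp (O L)`. The upper bound on `f` puts `f` below `C3 * g` beyond a radius of order
`L ^ (1 / θ2)`, hence `F ≲ L ^ (1 / θ2)`. The lower bound on `f`, together with its positive
minimum on a compact interval, gives `inf_{[C2, F]} f ≳ exp (-c4 * F ^ θ1)`, so the exponent is
`O ((1 + F) ^ (1 + θ1)) = O (L ^ ((1 + θ1) / θ2))`.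
-/

open MeasureTheory Set Real

noncomputable section

open Filter Topology

theorem exists_pos_forall_of_eventually_nhdsGT {P : ℝ → Prop} (h : ∀ᶠ s in 𝓝[>] 0, P s) :
    ∃ s1 > 0, ∀ s, 0 < s → s ≤ s1 → P s := by
  obtain ⟨s1, hs1, hsub⟩ := mem_nhdsGT_iff_exists_Ioc_subset.1 h
  exact ⟨s1, hs1, fun s hs hss => hsub ⟨hs, hss⟩⟩


theorem rpow_le_min_invFun' {Φ : ℝ → ℝ} {b α s : ℝ} (hb : 0 ≤ b) (hα : 0 < α) (hs : 0 < s)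
    (hbs : b * s ≤ 1) (hΦ : ∀ u, 0 < u → u < 1 → b * Φ u ≤ u ^ α) (hne : ∃ u > 0, s ≤ Φ u) :
    (b * s) ^ α⁻¹ ≤ min (invFun' Φ s) 1 := by
  have hle_one : (b * s) ^ α⁻¹ ≤ 1 := rpow_le_one (by positivity) hbs (inv_nonneg.2 hα.le)
  refine le_min (le_csInf hne ?_) hle_one
  rintro u ⟨hu, hsu⟩
  rcases le_or_gt 1 u with h1u | hu1
  · exact hle_one.trans h1u
  · calc (b * s) ^ α⁻¹ ≤ (u ^ α) ^ α⁻¹ := by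
          gcongr
          exact (mul_le_mul_of_nonneg_left hsu hb).trans (hΦ u hu hu1)
      _ = u := rpow_rpow_inv hu.le hα.ne'

theorem div_mul_le_rpow_of_lower_scaling {Φ : ℝ → ℝ} {c α : ℝ} (hΦpos : ∀ u > 0, 0 < Φ u)
    (hscal : ∀ r R : ℝ, 0 < r → r ≤ R → c * (R / r) ^ α ≤ Φ R / Φ r) {u : ℝ} (hu : 0 < u)
    (hu1 : u ≤ 1) : c / Φ 1 * Φ u ≤ u ^ α := by
  have h := hscal u 1 hu hu1
  rw [one_div, inv_rpow hu.le, ← div_eq_mul_inv, div_le_div_iff₀ (by positivity) (hΦpos u hu)] at h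
  rw [div_mul_eq_mul_div, div_le_iff₀ (hΦpos 1 one_pos)]
  linarith

theorem exists_le_of_lower_scaling {Φ : ℝ → ℝ} {c α : ℝ} (hc : 0 < c) (hα : 0 < α)
    (hΦpos : ∀ u > 0, 0 < Φ u)
    (hscal : ∀ r R : ℝ, 0 < r → r ≤ R → c * (R / r) ^ α ≤ Φ R / Φ r) (s : ℝ) :
    ∃ u > 0, s ≤ Φ u := by
  have hlim := (tendsto_rpow_atTop hα).const_mul_atTop (mul_pos hc (hΦpos 1 one_pos))
  obtain ⟨R, hsR, hR1⟩ := ((hlim.eventually_ge_atTop s).and (eventually_ge_atTop 1)).exists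
  refine ⟨R, one_pos.trans_le hR1, hsR.trans ?_⟩
  have h := hscal 1 R one_pos hR1
  rw [div_one, le_div_iff₀ (hΦpos 1 one_pos)] at h
  linarith

theorem exists_mul_rpow_le_min_invFun' {Φ : ℝ → ℝ} {c α : ℝ} (hc : 0 < c) (hα : 0 < α)
    (hΦpos : ∀ u > 0, 0 < Φ u)
    (hscal : ∀ r R : ℝ, 0 < r → r ≤ R → c * (R / r) ^ α ≤ Φ R / Φ r) :
    ∃ a > 0, ∀ᶠ s in 𝓝[>] 0, a * s ^ α⁻¹ ≤ min (invFun' Φ s) 1 := by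
  have hb : 0 < c / Φ 1 := div_pos hc (hΦpos 1 one_pos)
  refine ⟨(c / Φ 1) ^ α⁻¹, by positivity, ?_⟩
  filter_upwards [Ioc_mem_nhdsGT (inv_pos.2 hb)] with s ⟨hs, hsb⟩
  rw [← mul_rpow hb.le hs.le]
  exact rpow_le_min_invFun' hb.le hα hs ((le_inv_mul_iff₀ hb).1 (by rwa [mul_one]))
    (fun u hu hu1 => div_mul_le_rpow_of_lower_scaling hΦpos hscal hu hu1.le)
    (exists_le_of_lower_scaling hc hα hΦpos hscal s)

theorem inv_pow_mul_inv_sq_le_of_upper_scaling {Ψ : ℝ → ℝ} {k β : ℝ} (hβ : 0 ≤ β)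
    (hΨpos : ∀ u > 0, 0 < Ψ u)
    (hscal : ∀ r R : ℝ, 0 < r → r ≤ R → Ψ R / Ψ r ≤ k * (R / r) ^ β) (d : ℕ) {w g : ℝ}
    (hw : 0 < w) (hwg : w ≤ g) (hg : g ≤ 1) :
    g⁻¹ ^ d * (Ψ g)⁻¹ ^ 2 ≤ (k / Ψ 1) ^ 2 * w⁻¹ ^ ((d : ℝ) + 2 * β) := by
  have hg0 : 0 < g := hw.trans_le hwg
  have hΨ1 : 0 < Ψ 1 := hΨpos 1 one_pos
  have hk : 0 ≤ k := by
    have h := hscal 1 1 one_pos le_rfl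
    rw [div_self hΨ1.ne', div_one, one_rpow, mul_one] at h
    linarith
  have hΨg : (Ψ g)⁻¹ ≤ k / Ψ 1 * w⁻¹ ^ β :=
    calc (Ψ g)⁻¹ = Ψ 1 / Ψ g / Ψ 1 := by field_simp [(hΨpos g hg0).ne']
      _ ≤ k * g⁻¹ ^ β / Ψ 1 := by
        gcongr
        simpa using hscal g 1 hg0 hg
      _ ≤ k * w⁻¹ ^ β / Ψ 1 := by gcongr
      _ = k / Ψ 1 * w⁻¹ ^ β := by ring
  calc g⁻¹ ^ d * (Ψ g)⁻¹ ^ 2 ≤ w⁻¹ ^ d * (k / Ψ 1 * w⁻¹ ^ β) ^ 2 := by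
        gcongr
        exact inv_nonneg.2 (hΨpos g hg0).le
      _ = (k / Ψ 1) ^ 2 * w⁻¹ ^ ((d : ℝ) + 2 * β) := by
        rw [rpow_add (by positivity), rpow_natCast, mul_comm 2 β, rpow_mul (by positivity),
          rpow_two]
        ring

theorem inv_mul_rpow_inv_rpow_eq {a s : ℝ} (ha : 0 < a) (hs : 0 < s) (α p : ℝ) :
    (a * s ^ α⁻¹)⁻¹ ^ p = a⁻¹ ^ p * exp (p / α * log (1 / s)) := by
  rw [mul_inv, mul_rpow (by positivity) (by positivity),
    rpow_def_of_pos (by positivity : 0 < (s ^ α⁻¹)⁻¹), log_inv, log_rpow hs, one_div, log_inv]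
  ring_nf

theorem inv_pow_mul_inv_sq_le_exp_of_upper_scaling {Ψ : ℝ → ℝ} {k β : ℝ} (hβ : 0 ≤ β)
    (hΨpos : ∀ u > 0, 0 < Ψ u)
    (hscal : ∀ r R : ℝ, 0 < r → r ≤ R → Ψ R / Ψ r ≤ k * (R / r) ^ β) (d : ℕ) {a α s g : ℝ}
    (ha : 0 < a) (hs : 0 < s) (hg : a * s ^ α⁻¹ ≤ g) (hg1 : g ≤ 1) :
    g⁻¹ ^ d * (Ψ g)⁻¹ ^ 2 ≤
      (k / Ψ 1) ^ 2 * a⁻¹ ^ ((d : ℝ) + 2 * β) * exp (((d : ℝ) + 2 * β) / α * log (1 / s)) := by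
  rw [mul_assoc, ← inv_mul_rpow_inv_rpow_eq ha hs]
  exact inv_pow_mul_inv_sq_le_of_upper_scaling hβ hΨpos hscal d (by positivity) hg hg1

theorem fStarInv_nonneg (f : ℝ → ℝ) (v : ℝ) : 0 ≤ fStarInv f v :=
  Real.sInf_nonneg fun _ hx => hx.1.le

theorem fStarInv_le {f : ℝ → ℝ} {v r : ℝ} (hr : 0 < r) (hv : 0 ≤ v) (hf : ∀ u ≥ r, f u ≤ v) :
    fStarInv f v ≤ r :=
  csInf_le ⟨0, fun _ hx => hx.1.le⟩
    ⟨hr, Real.sSup_le (by rintro _ ⟨u, hu, rfl⟩; exact hf u hu) hv⟩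

theorem fStarInv_le_mul_log_rpow {f : ℝ → ℝ} {s0 c5 c6 θ q C s v : ℝ} (hs0 : 0 < s0)
    (hc5 : 0 < c5) (hc6 : 0 < c6) (hθ : 0 < θ) (hq : 0 ≤ q)
    (hf : ∀ u ≥ s0, f u ≤ c5 * exp (-(c6 * u ^ θ))) (hs : 0 < s) (hL : 1 ≤ log (1 / s))
    (hsC : c5 * s ≤ C) (hv : C * s ^ q ≤ v) :
    fStarInv f v ≤ max s0 (((q + 1) / c6) ^ θ⁻¹) * log (1 / s) ^ θ⁻¹ := by
  set L := log (1 / s)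
  have hLs : L = -log s := by simp only [L, one_div, log_inv]
  set R := max s0 (((q + 1) / c6) ^ θ⁻¹)
  have hLθ : 1 ≤ L ^ θ⁻¹ := one_le_rpow hL (inv_nonneg.2 hθ.le)
  have hR : 0 < R := hs0.trans_le (le_max_left _ _)
  have hRθ : (q + 1) / c6 ≤ R ^ θ := by
    calc (q + 1) / c6 = (((q + 1) / c6) ^ θ⁻¹) ^ θ := (rpow_inv_rpow (by positivity) hθ.ne').symm
      _ ≤ R ^ θ := by gcongr; exact le_max_right _ _
  have hsq : c5 * exp (-((q + 1) * L)) = c5 * s * s ^ q := by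
    rw [mul_assoc, mul_comm s, ← rpow_add_one hs.ne', rpow_def_of_pos hs, hLs]
    ring_nf
  have hv0 : 0 ≤ v := (mul_nonneg ((by positivity : 0 ≤ c5 * s).trans hsC) (by positivity)).trans hv
  refine fStarInv_le (mul_pos hR (one_pos.trans_le hLθ)) hv0 fun u hu => ?_
  have hdecay : (q + 1) * L ≤ c6 * u ^ θ :=
    calc (q + 1) * L = c6 * ((q + 1) / c6 * L) := by field_simp
      _ ≤ c6 * (R ^ θ * L) := by gcongr
      _ = c6 * (R * L ^ θ⁻¹) ^ θ := by
        rw [mul_rpow hR.le (by positivity), rpow_inv_rpow (by linarith) hθ.ne']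
      _ ≤ c6 * u ^ θ := by gcongr
  have hu0 : s0 ≤ u := (le_max_left _ _).trans ((le_mul_of_one_le_right hR.le hLθ).trans hu)
  calc f u ≤ c5 * exp (-(c6 * u ^ θ)) := hf u hu0
    _ ≤ c5 * exp (-((q + 1) * L)) := by gcongr
    _ = c5 * s * s ^ q := hsq
    _ ≤ C * s ^ q := by gcongr
    _ ≤ v := hv

theorem exists_mul_exp_le_of_lower_bound {f : ℝ → ℝ} {C2 s0 c3 c4 θ : ℝ} (hC2 : 0 < C2)
    (hc3 : 0 < c3) (hc4 : 0 ≤ c4) (hθ : 0 ≤ θ) (hfpos : ∀ u > 0, 0 < f u)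
    (hfcont : ContinuousOn f (Ioi 0)) (hf : ∀ s ≥ s0, c3 * exp (-(c4 * s ^ θ)) ≤ f s) :
    ∃ m > 0, ∀ F r, r ∈ Icc C2 F → m * exp (-(c4 * F ^ θ)) ≤ f r := by
  have hsub : Icc C2 (max C2 s0) ⊆ Ioi 0 := fun x hx => hC2.trans_le hx.1
  obtain ⟨x0, hx0, hmin⟩ := isCompact_Icc.exists_isMinOn
    ⟨C2, left_mem_Icc.2 (le_max_left _ _)⟩ (hfcont.mono hsub)
  refine ⟨min (f x0) c3, lt_min (hfpos x0 (hsub hx0)) hc3, fun F r ⟨hC2r, hrF⟩ => ?_⟩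
  have hr : 0 < r := hC2.trans_le hC2r
  rcases lt_or_ge r s0 with hrs | hrs
  · have hexp : exp (-(c4 * F ^ θ)) ≤ 1 :=
      exp_le_one_iff.2 (neg_nonpos.2 (mul_nonneg hc4 (rpow_nonneg (hr.le.trans hrF) θ)))
    calc min (f x0) c3 * exp (-(c4 * F ^ θ)) ≤ f x0 * 1 :=
          mul_le_mul (min_le_left _ _) hexp (exp_pos _).le (hfpos x0 (hsub hx0)).le
      _ ≤ f r := by
        rw [mul_one]
        exact hmin ⟨hC2r, le_max_of_le_right hrs.le⟩
  · calc min (f x0) c3 * exp (-(c4 * F ^ θ)) ≤ c3 * exp (-(c4 * r ^ θ)) := by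
          gcongr
          exact min_le_right _ _
      _ ≤ f r := hf r hrs

theorem log_exp_one_add_div_le {F m μ c θ : ℝ} (hF : 0 ≤ F) (hm : 0 < m) (hc : 0 ≤ c)
    (hθ : 0 < θ) (hμ : m * exp (-(c * F ^ θ)) ≤ μ) :
    log (exp 1 + F / μ) ≤ (log (exp 1 + m⁻¹) + θ⁻¹ + c) * (1 + F) ^ θ := by
  have hμ0 : 0 < μ := (by positivity : 0 < m * exp (-(c * F ^ θ))).trans_le hμ
  have hE : 1 ≤ exp (c * F ^ θ) := one_le_exp (by positivity)
  have hdiv : F / μ ≤ m⁻¹ * F * exp (c * F ^ θ) := by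
    rw [div_le_iff₀ hμ0]
    calc F = m⁻¹ * F * exp (c * F ^ θ) * (m * exp (-(c * F ^ θ))) := by
          rw [exp_neg]; field_simp
      _ ≤ m⁻¹ * F * exp (c * F ^ θ) * μ := by gcongr
  have hprod : exp 1 + F / μ ≤ (exp 1 + m⁻¹) * (1 + F) * exp (c * F ^ θ) := by
    have : 0 ≤ exp 1 * F * exp (c * F ^ θ) + m⁻¹ * exp (c * F ^ θ) := by positivity
    nlinarith [exp_pos 1]
  have h1F : 1 ≤ (1 + F) ^ θ := one_le_rpow (by linarith) hθ.le
  have hlog_m : 0 ≤ log (exp 1 + m⁻¹) := log_nonneg (by linarith [add_one_le_exp 1, inv_pos.2 hm])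
  calc log (exp 1 + F / μ) ≤ log ((exp 1 + m⁻¹) * (1 + F) * exp (c * F ^ θ)) :=
        log_le_log (by positivity) hprod
    _ = log (exp 1 + m⁻¹) + log (1 + F) + c * F ^ θ := by
        rw [log_mul (by positivity) (by positivity), log_mul (by positivity) (by positivity),
          log_exp]
    _ ≤ log (exp 1 + m⁻¹) * (1 + F) ^ θ + (1 + F) ^ θ / θ + c * (1 + F) ^ θ := by
        gcongr
        · exact le_mul_of_one_le_right hlog_m h1F
        · exact log_le_rpow_div (by linarith) hθ
        · linarith
    _ = (log (exp 1 + m⁻¹) + θ⁻¹ + c) * (1 + F) ^ θ := by ring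

theorem exists_log_exp_one_add_div_sInf_le {f : ℝ → ℝ} {C2 s0 c3 c4 θ : ℝ} (hC2 : 0 < C2)
    (hc3 : 0 < c3) (hc4 : 0 ≤ c4) (hθ : 0 < θ) (hfpos : ∀ u > 0, 0 < f u)
    (hfcont : ContinuousOn f (Ioi 0)) (hf : ∀ s ≥ s0, c3 * exp (-(c4 * s ^ θ)) ≤ f s) :
    ∃ C > 0, ∀ F ≥ 0, log (exp 1 + F / sInf (f '' Icc C2 F)) ≤ C * (1 + F) ^ θ := by
  obtain ⟨m, hm, hmf⟩ := exists_mul_exp_le_of_lower_bound hC2 hc3 hc4 hθ.le hfpos hfcont hf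
  have hlog_m : 1 ≤ log (exp 1 + m⁻¹) :=
    (log_exp 1).symm.le.trans (log_le_log (exp_pos 1) (by linarith [inv_pos.2 hm]))
  refine ⟨log (exp 1 + m⁻¹) + θ⁻¹ + c4, by positivity, fun F hF => ?_⟩
  rcases lt_or_ge F C2 with hFC2 | hFC2
  · -- the interval is empty, and `F / sInf ∅ = F / 0 = 0`
    rw [Icc_eq_empty (not_le.2 hFC2), image_empty, Real.sInf_empty, div_zero, add_zero, log_exp]
    refine one_le_mul_of_one_le_of_one_le ?_ (one_le_rpow (by linarith) hθ.le)
    linarith [inv_pos.2 hθ]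
  · exact log_exp_one_add_div_le hF hm hc4 hθ
      (le_csInf ((nonempty_Icc.2 hFC2).image f) (by rintro _ ⟨r, hr, rfl⟩; exact hmf F r hr))

theorem one_add_rpow_le_mul_rpow {F R L θ1 θ2 : ℝ} (hF : 0 ≤ F) (hR : 0 ≤ R) (hL : 1 ≤ L)
    (hθ1 : 0 ≤ θ1) (hθ2 : 0 ≤ θ2) (hFR : F ≤ R * L ^ θ2⁻¹) :
    (1 + F) ^ (1 + θ1) ≤ (1 + R) ^ (1 + θ1) * L ^ ((1 + θ1) / θ2) := by
  have hLθ : 1 ≤ L ^ θ2⁻¹ := one_le_rpow hL (inv_nonneg.2 hθ2)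
  calc (1 + F) ^ (1 + θ1) ≤ ((1 + R) * L ^ θ2⁻¹) ^ (1 + θ1) := by gcongr; nlinarith
    _ = (1 + R) ^ (1 + θ1) * L ^ ((1 + θ1) / θ2) := by
      rw [mul_rpow (by positivity) (by positivity), ← rpow_mul (by positivity), inv_mul_eq_div]

theorem one_add_mul_le_mul_rpow {F R L X K θ1 θ2 : ℝ} (hF : 0 ≤ F) (hR : 0 ≤ R) (hL : 1 ≤ L)
    (hK : 0 ≤ K) (hθ1 : 0 ≤ θ1) (hθ2 : 0 ≤ θ2) (hFR : F ≤ R * L ^ θ2⁻¹)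
    (hX : X ≤ K * (1 + F) ^ θ1) :
    (1 + F) * X ≤ K * (1 + R) ^ (1 + θ1) * L ^ ((1 + θ1) / θ2) :=
  calc (1 + F) * X ≤ (1 + F) * (K * (1 + F) ^ θ1) := by gcongr
    _ = K * (1 + F) ^ (1 + θ1) := by rw [rpow_one_add' (by linarith) (by linarith)]; ring
    _ ≤ K * ((1 + R) ^ (1 + θ1) * L ^ ((1 + θ1) / θ2)) := by
      gcongr
      exact one_add_rpow_le_mul_rpow hF hR hL hθ1 hθ2 hFR
    _ = K * (1 + R) ^ (1 + θ1) * L ^ ((1 + θ1) / θ2) := (mul_assoc _ _ _).symm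

theorem mul_exp_mul_exp_le_mul_exp {c A B L e : ℝ} (hc : 0 ≤ c) (hA : 0 ≤ A) (hL : 1 ≤ L)
    (he : 1 ≤ e) : c * exp (A * L) * exp (B * L ^ e) ≤ c * exp ((A + B) * L ^ e) := by
  rw [mul_assoc, ← exp_add, add_mul]
  gcongr
  exact self_le_rpow_of_one_le hL he

theorem statement17_general
    (d : ℕ)
    (Φ : ℝ → ℝ) (hΦpos : ∀ u > 0, 0 < Φ u)
    (α1 α2 cL cU : ℝ) (hα1 : 0 < α1)
    (hcL : 0 < cL)
    (hΦscal : ∀ r R : ℝ, 0 < r → r ≤ R →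
      cL * (R / r) ^ α1 ≤ Φ R / Φ r ∧ Φ R / Φ r ≤ cU * (R / r) ^ α2)
    (Ψ : ℝ → ℝ) (hΨpos : ∀ u > 0, 0 < Ψ u)
    (β1 β2 k1 k2 : ℝ) (hβ1 : 0 < β1) (hβ12 : β1 ≤ β2) (hk1 : 0 < k1) (hk12 : k1 ≤ k2)
    (hΨscal : ∀ r R : ℝ, 0 < r → r ≤ R →
      k1 * (R / r) ^ β1 ≤ Ψ R / Ψ r ∧ Ψ R / Ψ r ≤ k2 * (R / r) ^ β2)
    (θ1 θ2 : ℝ) (hθ2 : 0 < θ2) (hθ12 : θ2 ≤ θ1)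
    (f : ℝ → ℝ) (hfpos : ∀ u > 0, 0 < f u)
    (hfcont : ContinuousOn f (Ioi 0))
    (c3 c4 c5 c6 s0 : ℝ) (hc3 : 0 < c3) (hc4 : 0 < c4) (hc5 : 0 < c5)
    (hc6 : 0 < c6) (hs0 : 0 < s0)
    (hf : ∀ s ≥ s0, c3 * Real.exp (-(c4 * s ^ θ1)) ≤ f s ∧
      f s ≤ c5 * Real.exp (-(c6 * s ^ θ2)))
    (C1 C2 C3 : ℝ) (hC1 : 0 < C1) (hC2 : 0 < C2) (hC3 : 0 < C3) :
    ∃ c7 > (0 : ℝ), ∃ c8 > (0 : ℝ), ∃ s1 > (0 : ℝ), ∀ s : ℝ, 0 < s → s ≤ s1 →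
      C1 * (min (invFun' Φ s) 1)⁻¹ ^ d * (Ψ (min (invFun' Φ s) 1))⁻¹ ^ 2 *
        Real.exp (C1 * (1 + fStarInv f (C3 * min (invFun' Φ s) 1)) *
          Real.log (Real.exp 1 + fStarInv f (C3 * min (invFun' Φ s) 1) /
            sInf (f '' Icc C2 (fStarInv f (C3 * min (invFun' Φ s) 1))))) ≤
      c7 * Real.exp (c8 * Real.log (1 / s) ^ ((1 + θ1) / θ2)) := by
  have hθ1 : 0 < θ1 := hθ2.trans_le hθ12
  have hβ2 : 0 < β2 := hβ1.trans_le hβ12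
  have hk2 : 0 < k2 := hk1.trans_le hk12
  obtain ⟨a, ha, hag⟩ := exists_mul_rpow_le_min_invFun' hcL hα1 hΦpos
    fun r R hr hrR => (hΦscal r R hr hrR).1
  obtain ⟨Clog, hClog, hlog⟩ := exists_log_exp_one_add_div_sInf_le hC2 hc3 hc4.le hθ1 hfpos hfcont
    fun s hs => (hf s hs).1
  set R := max s0 (((α1⁻¹ + 1) / c6) ^ θ2⁻¹)
  set p := (d : ℝ) + 2 * β2
  have hp : 0 < p := by positivity
  have hΨ1 : 0 < Ψ 1 := hΨpos 1 one_pos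
  refine ⟨C1 * (k2 / Ψ 1) ^ 2 * a⁻¹ ^ p, by positivity,
    p / α1 + C1 * (Clog * (1 + R) ^ (1 + θ1)), by positivity,
    exists_pos_forall_of_eventually_nhdsGT ?_⟩
  filter_upwards [hag, Ioc_mem_nhdsGT (exp_pos (-1)),
    Ioc_mem_nhdsGT (by positivity : 0 < C3 * a / c5)] with s hg ⟨hs, hse⟩ ⟨_, hsC⟩
  have hL : 1 ≤ log (1 / s) := by
    rw [one_div, log_inv, le_neg]
    simpa using log_le_log hs hse
  set g := min (invFun' Φ s) 1
  set F := fStarInv f (C3 * g)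
  have hF0 : 0 ≤ F := fStarInv_nonneg f (C3 * g)
  have hF : F ≤ R * log (1 / s) ^ θ2⁻¹ :=
    fStarInv_le_mul_log_rpow hs0 hc5 hc6 hθ2 (inv_nonneg.2 hα1.le) (fun u hu => (hf u hu).2) hs hL
      ((le_div_iff₀' hc5).1 hsC) (by rw [mul_assoc]; exact mul_le_mul_of_nonneg_left hg hC3.le)
  have hpre := inv_pow_mul_inv_sq_le_exp_of_upper_scaling hβ2.le hΨpos
    (fun r R hr hrR => (hΨscal r R hr hrR).2) d ha hs hg (min_le_right _ _)
  have hexp := one_add_mul_le_mul_rpow hF0 (hs0.le.trans (le_max_left _ _)) hL hClog.le hθ1.le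
    hθ2.le hF (hlog F hF0)
  calc _ ≤ C1 * (k2 / Ψ 1) ^ 2 * a⁻¹ ^ p * exp (p / α1 * log (1 / s)) *
        exp (C1 * (Clog * (1 + R) ^ (1 + θ1) * log (1 / s) ^ ((1 + θ1) / θ2))) := by
        rw [mul_assoc C1 (1 + F)]
        gcongr ?_ * exp (C1 * ?_)
        simpa only [mul_assoc] using mul_le_mul_of_nonneg_left hpre hC1.le
    _ ≤ _ := by
      rw [← mul_assoc C1 (Clog * _)]
      exact mul_exp_mul_exp_le_mul_exp (by positivity) (by positivity) hL
        ((one_le_div hθ2).2 (by linarith))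

theorem statement17
    (d : ℕ) (hd : 1 ≤ d)
    (Φ : ℝ → ℝ) (hΦpos : ∀ u > 0, 0 < Φ u) (hΦmono : StrictMonoOn Φ (Ioi 0))
    (α1 α2 cL cU : ℝ) (hα1 : 0 < α1) (hα12 : α1 ≤ α2) (hα2 : α2 < 2)
    (hcL : 0 < cL) (hcU : cL ≤ cU)
    (hΦscal : ∀ r R : ℝ, 0 < r → r ≤ R →
      cL * (R / r) ^ α1 ≤ Φ R / Φ r ∧ Φ R / Φ r ≤ cU * (R / r) ^ α2)
    (Ψ : ℝ → ℝ) (hΨpos : ∀ u > 0, 0 < Ψ u) (hΨmono : MonotoneOn Ψ (Ioi 0))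
    (β1 β2 k1 k2 : ℝ) (hβ1 : 0 < β1) (hβ12 : β1 ≤ β2) (hk1 : 0 < k1) (hk12 : k1 ≤ k2)
    (hΨscal : ∀ r R : ℝ, 0 < r → r ≤ R →
      k1 * (R / r) ^ β1 ≤ Ψ R / Ψ r ∧ Ψ R / Ψ r ≤ k2 * (R / r) ^ β2)
    (θ1 θ2 : ℝ) (hθ2 : 0 < θ2) (hθ12 : θ2 ≤ θ1)
    (f : ℝ → ℝ) (hfpos : ∀ u > 0, 0 < f u) (hfbdd : ∃ Mf : ℝ, ∀ u > 0, f u ≤ Mf)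
    (hfcont : ContinuousOn f (Ioi 0))
    (c3 c4 c5 c6 s0 : ℝ) (hc3 : 0 < c3) (hc4 : 0 < c4) (hc5 : 0 < c5)
    (hc6 : 0 < c6) (hs0 : 0 < s0)
    (hf : ∀ s ≥ s0, c3 * Real.exp (-(c4 * s ^ θ1)) ≤ f s ∧
      f s ≤ c5 * Real.exp (-(c6 * s ^ θ2)))
    (C1 C2 C3 : ℝ) (hC1 : 0 < C1) (hC2 : 0 < C2) (hC3 : 0 < C3) :
    ∃ c7 > (0 : ℝ), ∃ c8 > (0 : ℝ), ∃ s1 > (0 : ℝ), ∀ s : ℝ, 0 < s → s ≤ s1 →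
      C1 * (min (invFun' Φ s) 1)⁻¹ ^ d * (Ψ (min (invFun' Φ s) 1))⁻¹ ^ 2 *
        Real.exp (C1 * (1 + fStarInv f (C3 * min (invFun' Φ s) 1)) *
          Real.log (Real.exp 1 + fStarInv f (C3 * min (invFun' Φ s) 1) /
            sInf (f '' Icc C2 (fStarInv f (C3 * min (invFun' Φ s) 1))))) ≤
      c7 * Real.exp (c8 * Real.log (1 / s) ^ ((1 + θ1) / θ2)) :=
  statement17_general d Φ hΦpos α1 α2 cL cU hα1 hcL hΦscal Ψ hΨpos β1 β2 k1 k2 hβ1 hβ12 hk1 hk12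
    hΨscal θ1 θ2 hθ2 hθ12 f hfpos hfcont c3 c4 c5 c6 s0 hc3 hc4 hc5 hc6 hs0 hf C1 C2 C3 hC1 hC2 hC3
end
end

section
/- Let θ > 1 and c1, c2 > 0, and define β(s) = c1 exp( c2 s^{−1/θ} log(e + 1/s) ) for s > 0, with generalized inverse β⁻¹(r) = inf{ s > 0 : β(s) ≤ r } for r > 0. Then for every t > c1, the integral ∫_t^∞ β⁻¹(r) r^{−1} dr is finite. -/
/-!
Write `β s = c₁ exp (ψ s)` with `ψ s = c₂ s^{-1/θ} log (e + 1/s)`. Since the logarithm grows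
slower than any power, `ψ s ≤ C s^{-α}` on `(0, 1]` for some `α ∈ (1/θ, 1)`. Taking
`s = (C / L)^{1/α}` with `L = log (r / c₁)` then gives `β⁻¹ r ≤ (C / L)^{1/α}` for large `r`, and
`∫ L^{-1/α} dr / r = ∫ L^{-1/α} dL` converges because `1/α > 1`. On the remaining bounded range
`β⁻¹` is bounded, because `β → c₁ < t` at infinity.
-/

open MeasureTheory Set Real Filter Topology

noncomputable section

def genInv (β : ℝ → ℝ) (r : ℝ) : ℝ :=
  sInf {s | 0 < s ∧ β s ≤ r}

section GenInv

variable {β : ℝ → ℝ} {r s : ℝ}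

theorem genInv_nonneg (β : ℝ → ℝ) (r : ℝ) : 0 ≤ genInv β r :=
  Real.sInf_nonneg fun _ hs => hs.1.le

theorem genInv_le (hs : 0 < s) (hβs : β s ≤ r) : genInv β r ≤ s :=
  csInf_le ⟨0, fun _ h => h.1.le⟩ ⟨hs, hβs⟩

theorem antitoneOn_genInv (hs : 0 < s) (hβs : β s ≤ r) : AntitoneOn (genInv β) (Ici r) :=
  fun _ hr₁ _ _ hr₁₂ => csInf_le_csInf ⟨0, fun _ h => h.1.le⟩ ⟨s, hs, hβs.trans hr₁⟩
    fun _ h => ⟨h.1, h.2.trans hr₁₂⟩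

theorem genInv_le_of_le_exp_rpow {c C α L : ℝ} (hC : 0 < C) (hα : 0 < α)
    (hβ : ∀ s ∈ Ioc 0 1, β s ≤ c * exp (C * s ^ (-α))) (hCL : C ≤ L) (hr : c * exp L ≤ r) :
    genInv β r ≤ (C / L) ^ α⁻¹ := by
  have hL : 0 < L := hC.trans_le hCL
  have hCL₀ : 0 ≤ C / L := by positivity
  have hs : 0 < (C / L) ^ α⁻¹ := rpow_pos_of_pos (div_pos hC hL) _
  have hs₁ : (C / L) ^ α⁻¹ ≤ 1 :=
    rpow_le_one hCL₀ ((div_le_one hL).mpr hCL) (inv_nonneg.mpr hα.le)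
  have hpow : C * ((C / L) ^ α⁻¹) ^ (-α) = L := by
    rw [← rpow_mul hCL₀, inv_mul_eq_div, neg_div_self hα.ne', rpow_neg_one, inv_div]
    field_simp
  refine genInv_le hs ((hβ _ ⟨hs, hs₁⟩).trans ?_)
  rwa [hpow]

end GenInv

theorem integrableOn_log_div_rpow_neg_div {c q a : ℝ} (hc : 0 < c) (hq : 1 < q) (ha : c < a) :
    IntegrableOn (fun r => log (r / c) ^ (-q) / r) (Ioi a) := by
  have hlog_pos : ∀ r ∈ Ici a, 0 < log (r / c) := fun r hr =>
    log_pos ((one_lt_div hc).mpr (ha.trans_le hr))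
  refine integrableOn_Ioi_deriv_of_nonneg' (l := 0)
    (g := fun r => -(q - 1)⁻¹ * log (r / c) ^ (1 - q)) (fun r hr => ?_) (fun r hr => ?_) ?_
  · have hr₀ : 0 < r := hc.trans (ha.trans_le hr)
    have hlog : HasDerivAt (fun r => log (r / c)) r⁻¹ r := by
      refine (((hasDerivAt_id r).div_const c).log (div_pos hr₀ hc).ne').congr_deriv ?_
      simp only [id]
      field_simp
    refine ((hlog.rpow_const (p := 1 - q) (Or.inl (hlog_pos r hr).ne')).const_mul
      (-(q - 1)⁻¹)).congr_deriv ?_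
    rw [show 1 - q - 1 = -q by ring]
    field_simp [(sub_pos.mpr hq).ne']
    ring
  · exact div_nonneg (rpow_nonneg (hlog_pos r (Ioi_subset_Ici_self hr)).le _)
      (hc.trans (ha.trans hr)).le
  · have hlog : Tendsto (fun r => log (r / c)) atTop atTop :=
      tendsto_log_atTop.comp (tendsto_id.atTop_div_const hc)
    have hpow : Tendsto (fun x : ℝ => x ^ (1 - q)) atTop (𝓝 0) := by
      simpa using tendsto_rpow_neg_atTop (sub_pos.mpr hq)
    simpa using (hpow.comp hlog).const_mul (-(q - 1)⁻¹)

theorem integrableOn_genInv_div {β : ℝ → ℝ} {c C α t : ℝ} (hc : 0 < c) (hC : 0 < C)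
    (hα₀ : 0 < α) (hα₁ : α < 1) (hβ : ∀ s ∈ Ioc 0 1, β s ≤ c * exp (C * s ^ (-α)))
    (hlim : Tendsto β atTop (𝓝 c)) (ht : c < t) :
    IntegrableOn (fun r => genInv β r / r) (Ioi t) := by
  obtain ⟨s₀, hβs₀, hs₀⟩ :=
    ((hlim.eventually (gt_mem_nhds ht)).and (eventually_gt_atTop 0)).exists
  have ht₀ : 0 < t := hc.trans ht
  set r₀ := max t (c * exp C)
  have hmeas : AEStronglyMeasurable (fun r => genInv β r / r) (volume.restrict (Ioi t)) :=
    ((aemeasurable_restrict_of_antitoneOn measurableSet_Ioi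
      ((antitoneOn_genInv hs₀ hβs₀.le).mono Ioi_subset_Ici_self)).div
        aemeasurable_id).aestronglyMeasurable
  have hnear : IntegrableOn (fun r => genInv β r / r) (Ioc t r₀) := by
    refine (integrableOn_const (C := s₀ / t) measure_Ioc_lt_top.ne).mono'
      (hmeas.mono_measure (Measure.restrict_mono Ioc_subset_Ioi_self le_rfl)) ?_
    filter_upwards [ae_restrict_mem measurableSet_Ioc] with r hr
    rw [norm_of_nonneg (div_nonneg (genInv_nonneg β r) (ht₀.trans hr.1).le)]
    exact div_le_div₀ hs₀.le (genInv_le hs₀ (hβs₀.le.trans hr.1.le)) ht₀ hr.1.le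
  have hfar : IntegrableOn (fun r => genInv β r / r) (Ioi r₀) := by
    refine ((integrableOn_log_div_rpow_neg_div hc ((one_lt_inv₀ hα₀).mpr hα₁)
      (ht.trans_le (le_max_left _ _))).const_mul (C ^ α⁻¹)).mono'
      (hmeas.mono_measure (Measure.restrict_mono (Ioi_subset_Ioi (le_max_left _ _)) le_rfl)) ?_
    filter_upwards [ae_restrict_mem measurableSet_Ioi] with r hr
    have hr₀ : 0 < r := ht₀.trans_le ((le_max_left _ _).trans hr.le)
    have hrc : c * exp (log (r / c)) = r := by
      rw [exp_log (div_pos hr₀ hc)]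
      field_simp
    have hCL : C < log (r / c) := by
      rw [lt_log_iff_exp_lt (div_pos hr₀ hc), lt_div_iff₀' hc]
      exact (le_max_right _ _).trans_lt hr
    have hL : 0 < log (r / c) := hC.trans hCL
    rw [norm_of_nonneg (div_nonneg (genInv_nonneg β r) hr₀.le)]
    calc genInv β r / r ≤ (C / log (r / c)) ^ α⁻¹ / r := by
          gcongr
          exact genInv_le_of_le_exp_rpow hC hα₀ hβ hCL.le hrc.le
      _ = C ^ α⁻¹ * (log (r / c) ^ (-α⁻¹) / r) := by
          rw [div_rpow hC.le hL.le, rpow_neg hL.le]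
          ring
  rw [← Ioc_union_Ioi_eq_Ioi (le_max_left t (c * exp C) : t ≤ r₀)]
  exact hnear.union hfar

theorem rpow_neg_mul_log_exp_add_inv_le {a ε s : ℝ} (hε : 0 < ε) (hs : 0 < s) (hs₁ : s ≤ 1) :
    s ^ (-a) * log (exp 1 + 1 / s) ≤ (exp 1 + 1) ^ ε / ε * s ^ (-(a + ε)) := by
  have hlog : log (exp 1 + 1 / s) ≤ (exp 1 + 1) ^ ε / ε * s ^ (-ε) := calc
    log (exp 1 + 1 / s) ≤ (exp 1 + 1 / s) ^ ε / ε := log_le_rpow_div (by positivity) hε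
    _ ≤ ((exp 1 + 1) / s) ^ ε / ε := by
      gcongr
      rw [add_div]
      gcongr
      exact le_div_self (exp_pos 1).le hs hs₁
    _ = (exp 1 + 1) ^ ε / ε * s ^ (-ε) := by
      rw [div_rpow (by positivity) hs.le, rpow_neg hs.le]
      ring
  calc s ^ (-a) * log (exp 1 + 1 / s) ≤ s ^ (-a) * ((exp 1 + 1) ^ ε / ε * s ^ (-ε)) := by
        gcongr
    _ = (exp 1 + 1) ^ ε / ε * s ^ (-(a + ε)) := by
      rw [neg_add, rpow_add hs]
      ring

theorem tendsto_rpow_neg_mul_log_exp_add_inv {a : ℝ} (ha : 0 < a) :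
    Tendsto (fun s => s ^ (-a) * log (exp 1 + 1 / s)) atTop (𝓝 0) := by
  have hlog : Tendsto (fun s : ℝ => log (exp 1 + 1 / s)) atTop (𝓝 1) := by
    have h : Tendsto (fun s : ℝ => exp 1 + 1 / s) atTop (𝓝 (exp 1)) := by
      simpa [one_div] using tendsto_const_nhds.add (tendsto_inv_atTop_zero (𝕜 := ℝ))
    simpa [Function.comp_def] using (continuousAt_log (exp_pos 1).ne').tendsto.comp h
  simpa using (tendsto_rpow_neg_atTop ha).mul hlog

theorem statement19 (θ c1 c2 : ℝ) (hθ : 1 < θ) (hc1 : 0 < c1) (hc2 : 0 < c2) :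
    ∀ t : ℝ, c1 < t →
      IntegrableOn
        (fun r : ℝ =>
          sInf {s : ℝ | 0 < s ∧
            c1 * Real.exp (c2 * s ^ (-(1 / θ)) * Real.log (Real.exp 1 + 1 / s)) ≤ r} / r)
        (Ioi t) volume := by
  intro t ht
  have hθ₀ : 0 < 1 / θ := by positivity
  have hθ₁ : 1 / θ < 1 := (div_lt_one (by linarith)).mpr hθ
  set ε := (1 - 1 / θ) / 2
  have hε : 0 < ε := by simp only [ε]; linarith
  refine integrableOn_genInv_div (C := c2 * ((exp 1 + 1) ^ ε / ε)) (α := 1 / θ + ε) hc1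
    (by positivity) (by positivity) (by simp only [ε]; linarith) (fun s ⟨hs, hs₁⟩ => ?_) ?_ ht
  · refine mul_le_mul_of_nonneg_left (exp_le_exp.mpr ?_) hc1.le
    calc c2 * s ^ (-(1 / θ)) * log (exp 1 + 1 / s)
        = c2 * (s ^ (-(1 / θ)) * log (exp 1 + 1 / s)) := mul_assoc _ _ _
      _ ≤ c2 * ((exp 1 + 1) ^ ε / ε * s ^ (-(1 / θ + ε))) :=
        mul_le_mul_of_nonneg_left (rpow_neg_mul_log_exp_add_inv_le hε hs hs₁) hc2.le
      _ = c2 * ((exp 1 + 1) ^ ε / ε) * s ^ (-(1 / θ + ε)) := by ring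
  · have hψ : Tendsto (fun s => c2 * s ^ (-(1 / θ)) * log (exp 1 + 1 / s)) atTop (𝓝 0) := by
      simpa only [mul_zero, mul_assoc] using
        (tendsto_rpow_neg_mul_log_exp_add_inv hθ₀).const_mul c2
    simpa only [Function.comp_def, exp_zero, mul_one] using
      ((continuous_exp.tendsto 0).comp hψ).const_mul c1
end
end
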